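/- Let σ ∈ L*_up(ψ, N), i.e., σ(i, n−i) + σ(n−i, i) ≤ ψ(n) for all 1 ≤ i ≤ n−1 and n ≥ N. Suppose ϑ : ℝ⁺ → ℝ is differentiable and non-negative, ϑ' is increasing on [1, ∞), e·ψ(x)·ϑ(x) ≤ ϑ'(x) for all x ≥ N, and ϑ'(1) ≥ 1. Then for every n ≥ 1, E(e^{H_{n,σ}}) ≤ e^N · ϑ'(n). -/
import Mathlib


inductive BTree
  | leaf : BTree
  | node : BTree → BTree → BTree
deriving DecidableEq

def BTree.size : BTree → ℕ
  | .leaf => 1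
  | .node l r => l.size + r.size

def BTree.height : BTree → ℕ
  | .leaf => 0
  | .node l r => 1 + max l.height r.height

noncomputable def Pσ (σ : ℕ → ℕ → ℝ) : BTree → ℝ
  | .leaf => 1
  | .node l r => σ l.size r.size * Pσ σ l * Pσ σ r

def trees : ℕ → Finset BTree
  | 0 => ∅
  | 1 => {BTree.leaf}
  | (n+2) => (Finset.Ico 1 (n+2)).attach.biUnion
      (fun k => ((trees k.1) ×ˢ (trees (n+2-k.1))).image (fun p => BTree.node p.1 p.2))
  decreasing_by
  · exact (Finset.mem_Ico.mp k.2).2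
  · have h := (Finset.mem_Ico.mp k.2).1; omega

noncomputable def expPow (σ : ℕ → ℕ → ℝ) (φ : ℝ) (n : ℕ) : ℝ :=
  ∑ t ∈ trees n, Pσ σ t * φ ^ t.height

noncomputable def expH (σ : ℕ → ℕ → ℝ) (n : ℕ) : ℝ :=
  ∑ t ∈ trees n, Pσ σ t * (t.height : ℝ)

section Aux
open Finset

lemma size_of_mem_trees : ∀ n t, t ∈ trees n → t.size = n := by
  intro n
  induction n using Nat.strong_induction_on with
  | _ n ih =>
    match n with
    | 0 => simp [trees]
    | 1 => intro t ht; simp [trees] at ht; subst ht; rfl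
    | (m+2) =>
      intro t ht
      rw [trees] at ht
      simp only [Finset.mem_biUnion, Finset.mem_attach, Finset.mem_image,
        Finset.mem_product, true_and] at ht
      obtain ⟨k, ⟨⟨l, r⟩, ⟨hl, hr⟩, rfl⟩⟩ := ht
      have hk := Finset.mem_Ico.mp k.2
      have h1 := ih k.1 (by omega) l hl
      have h2 := ih (m+2-k.1) (by omega) r hr
      simp [BTree.size, h1, h2]; omega

lemma sum_trees_succ (n : ℕ) (f : BTree → ℝ) :
    ∑ t ∈ trees (n+2), f t =
      ∑ i ∈ Finset.Ico 1 (n+2), ∑ l ∈ trees i, ∑ r ∈ trees (n+2-i), f (BTree.node l r) := by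
  rw [trees]
  rw [Finset.sum_biUnion]
  · rw [← Finset.sum_attach (Finset.Ico 1 (n+2))
      (fun i => ∑ l ∈ trees i, ∑ r ∈ trees (n+2-i), f (BTree.node l r))]
    refine Finset.sum_congr rfl fun k _ => ?_
    rw [Finset.sum_image]
    · rw [Finset.sum_product]
    · rintro ⟨a, b⟩ _ ⟨c, d⟩ _ h
      simpa using h
  · rintro k _ k' _ hkk'
    simp only [Function.onFun]
    apply Finset.disjoint_left.mpr
    rintro t ht ht'
    simp only [Finset.mem_image, Finset.mem_product] at ht ht'
    obtain ⟨⟨a, b⟩, ⟨ha, _⟩, rfl⟩ := ht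
    obtain ⟨⟨c, d⟩, ⟨hc, _⟩, h⟩ := ht'
    have h1 := size_of_mem_trees _ _ ha
    have h2 := size_of_mem_trees _ _ hc
    cases h
    exact hkk' (Subtype.ext (h2 ▸ h1).symm)

end Aux
section Aux2
open Finset

lemma Pσ_nonneg (σ : ℕ → ℕ → ℝ) (hσ : ∀ i j, 0 ≤ σ i j) : ∀ t, 0 ≤ Pσ σ t := by
  intro t
  induction t with
  | leaf => simp [Pσ]
  | node l r hl hr => exact mul_nonneg (mul_nonneg (hσ _ _) hl) hr

lemma height_lt_size : ∀ t : BTree, t.height < t.size := by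
  intro t
  induction t with
  | leaf => simp [BTree.height, BTree.size]
  | node l r hl hr => simp [BTree.height, BTree.size]; omega

lemma sum_Pσ (σ : ℕ → ℕ → ℝ)
    (hsum : ∀ k, 2 ≤ k → ∑ i ∈ Finset.Ico 1 k, σ i (k - i) = 1) :
    ∀ n, 1 ≤ n → ∑ t ∈ trees n, Pσ σ t = 1 := by
  intro n
  induction n using Nat.strong_induction_on with
  | _ n ih =>
    match n with
    | 0 => intro h; omega
    | 1 => intro _; simp [trees, Pσ]
    | (m+2) =>
      intro _
      rw [sum_trees_succ]
      have : ∀ i ∈ Finset.Ico 1 (m+2),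
          ∑ l ∈ trees i, ∑ r ∈ trees (m+2-i), Pσ σ (BTree.node l r) = σ i (m+2-i) := by
        intro i hi
        have hi' := Finset.mem_Ico.mp hi
        have e1 : ∀ l ∈ trees i, ∀ r ∈ trees (m+2-i),
            Pσ σ (BTree.node l r) = σ i (m+2-i) * Pσ σ l * Pσ σ r := by
          intro l hl r hr
          rw [Pσ, size_of_mem_trees _ _ hl, size_of_mem_trees _ _ hr]
        calc ∑ l ∈ trees i, ∑ r ∈ trees (m+2-i), Pσ σ (BTree.node l r)
            = ∑ l ∈ trees i, ∑ r ∈ trees (m+2-i), σ i (m+2-i) * Pσ σ l * Pσ σ r := by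
              refine Finset.sum_congr rfl fun l hl => Finset.sum_congr rfl fun r hr => ?_
              exact e1 l hl r hr
          _ = σ i (m+2-i) * (∑ l ∈ trees i, Pσ σ l) * (∑ r ∈ trees (m+2-i), Pσ σ r) := by
              simp only [Finset.sum_mul, Finset.mul_sum]
              rw [Finset.sum_comm]
          _ = σ i (m+2-i) := by
              rw [ih i (by omega) hi'.1, ih (m+2-i) (by omega) (by omega)]
              ring
      rw [Finset.sum_congr rfl this, hsum (m+2) (by omega)]

lemma expPow_nonneg (σ : ℕ → ℕ → ℝ) (hσ : ∀ i j, 0 ≤ σ i j) (φ : ℝ) (hφ : 0 ≤ φ) (n : ℕ) :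
    0 ≤ expPow σ φ n :=
  Finset.sum_nonneg fun t _ => mul_nonneg (Pσ_nonneg σ hσ t) (pow_nonneg hφ _)

lemma expPow_le_pow (σ : ℕ → ℕ → ℝ) (hσ : ∀ i j, 0 ≤ σ i j)
    (hsum : ∀ k, 2 ≤ k → ∑ i ∈ Finset.Ico 1 k, σ i (k - i) = 1)
    (φ : ℝ) (hφ : 1 ≤ φ) (n : ℕ) (hn : 1 ≤ n) :
    expPow σ φ n ≤ φ ^ (n - 1) := by
  have : expPow σ φ n ≤ ∑ t ∈ trees n, Pσ σ t * φ ^ (n-1) := by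
    refine Finset.sum_le_sum fun t ht => ?_
    refine mul_le_mul_of_nonneg_left ?_ (Pσ_nonneg σ hσ t)
    refine pow_le_pow_right₀ hφ ?_
    have := height_lt_size t
    have := size_of_mem_trees _ _ ht
    omega
  rwa [← Finset.sum_mul, sum_Pσ σ hsum n hn, one_mul] at this

lemma expPow_one (σ : ℕ → ℕ → ℝ) (φ : ℝ) : expPow σ φ 1 = 1 := by
  simp [expPow, trees, Pσ, BTree.height]

end Aux2
section Aux3
open Finset

lemma expPow_rec_le (σ : ℕ → ℕ → ℝ) (hσ : ∀ i j, 0 ≤ σ i j)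
    (hsum : ∀ k, 2 ≤ k → ∑ i ∈ Finset.Ico 1 k, σ i (k - i) = 1)
    (φ : ℝ) (hφ : 1 ≤ φ) (m : ℕ) :
    expPow σ φ (m+2) ≤
      φ * ∑ i ∈ Finset.Ico 1 (m+2), (σ i (m+2-i) + σ (m+2-i) i) * expPow σ φ i := by
  have hφ0 : (0:ℝ) ≤ φ := le_trans zero_le_one hφ
  have key : expPow σ φ (m+2) ≤
      ∑ i ∈ Finset.Ico 1 (m+2),
        φ * (σ i (m+2-i) * (expPow σ φ i + expPow σ φ (m+2-i))) := by
    rw [expPow, sum_trees_succ]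
    refine Finset.sum_le_sum fun i hi => ?_
    have hi' := Finset.mem_Ico.mp hi
    have step : ∀ l ∈ trees i, ∀ r ∈ trees (m+2-i),
        Pσ σ (BTree.node l r) * φ ^ (BTree.node l r).height ≤
        φ * (σ i (m+2-i) * (Pσ σ l * φ ^ l.height * Pσ σ r +
          Pσ σ l * (Pσ σ r * φ ^ r.height))) := by
      intro l hl r hr
      rw [Pσ, size_of_mem_trees _ _ hl, size_of_mem_trees _ _ hr]
      have hPl := Pσ_nonneg σ hσ l
      have hPr := Pσ_nonneg σ hσ r
      have hmax : φ ^ (BTree.node l r).height ≤ φ * (φ ^ l.height + φ ^ r.height) := by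
        show φ ^ (1 + max l.height r.height) ≤ _
        rw [pow_add, pow_one]
        refine mul_le_mul_of_nonneg_left ?_ hφ0
        rcases max_choice l.height r.height with h | h <;> rw [h]
        · exact le_add_of_nonneg_right (pow_nonneg hφ0 _)
        · exact le_add_of_nonneg_left (pow_nonneg hφ0 _)
      have hc : 0 ≤ σ i (m+2-i) * Pσ σ l * Pσ σ r :=
        mul_nonneg (mul_nonneg (hσ _ _) hPl) hPr
      calc σ i (m+2-i) * Pσ σ l * Pσ σ r * φ ^ (BTree.node l r).height
          ≤ σ i (m+2-i) * Pσ σ l * Pσ σ r * (φ * (φ ^ l.height + φ ^ r.height)) :=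
            mul_le_mul_of_nonneg_left hmax hc
        _ = φ * (σ i (m+2-i) * (Pσ σ l * φ ^ l.height * Pσ σ r +
              Pσ σ l * (Pσ σ r * φ ^ r.height))) := by ring
    calc ∑ l ∈ trees i, ∑ r ∈ trees (m+2-i),
            Pσ σ (BTree.node l r) * φ ^ (BTree.node l r).height
        ≤ ∑ l ∈ trees i, ∑ r ∈ trees (m+2-i),
            φ * (σ i (m+2-i) * (Pσ σ l * φ ^ l.height * Pσ σ r +
              Pσ σ l * (Pσ σ r * φ ^ r.height))) :=
          Finset.sum_le_sum fun l hl => Finset.sum_le_sum fun r hr => step l hl r hr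
      _ = φ * (σ i (m+2-i) *
            ((∑ l ∈ trees i, Pσ σ l * φ ^ l.height) * (∑ r ∈ trees (m+2-i), Pσ σ r) +
             (∑ l ∈ trees i, Pσ σ l) * (∑ r ∈ trees (m+2-i), Pσ σ r * φ ^ r.height))) := by
          simp only [← Finset.mul_sum, Finset.sum_add_distrib, ← Finset.sum_mul]
      _ = φ * (σ i (m+2-i) * (expPow σ φ i + expPow σ φ (m+2-i))) := by
          rw [sum_Pσ σ hsum i (by omega), sum_Pσ σ hsum (m+2-i) (by omega), expPow, expPow]
          ring
  refine key.trans (le_of_eq ?_)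
  have symm : ∑ i ∈ Finset.Ico 1 (m+2), σ i (m+2-i) * expPow σ φ (m+2-i)
      = ∑ i ∈ Finset.Ico 1 (m+2), σ (m+2-i) i * expPow σ φ i := by
    refine Finset.sum_nbij' (fun i => m+2-i) (fun i => m+2-i) ?_ ?_ ?_ ?_ ?_ <;>
      intro a ha <;> simp only [Finset.mem_Ico] at ha ⊢ <;>
      first
        | omega
        | (congr 1 <;> congr 1 <;> omega)
  calc ∑ i ∈ Finset.Ico 1 (m+2),
          φ * (σ i (m+2-i) * (expPow σ φ i + expPow σ φ (m+2-i)))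
      = φ * ((∑ i ∈ Finset.Ico 1 (m+2), σ i (m+2-i) * expPow σ φ i) +
          ∑ i ∈ Finset.Ico 1 (m+2), σ i (m+2-i) * expPow σ φ (m+2-i)) := by
        rw [← Finset.sum_add_distrib, ← Finset.mul_sum]
        congr 1
        exact Finset.sum_congr rfl fun i _ => by ring
    _ = φ * ∑ i ∈ Finset.Ico 1 (m+2), (σ i (m+2-i) + σ (m+2-i) i) * expPow σ φ i := by
        rw [symm, ← Finset.sum_add_distrib]
        congr 1
        exact Finset.sum_congr rfl fun i _ => by ring

end Aux3
section Aux4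
open Finset

lemma sum_deriv_le (ϑ : ℝ → ℝ)
    (hdiff : ∀ x : ℝ, 0 < x → DifferentiableAt ℝ ϑ x)
    (hnonneg : ∀ x : ℝ, 0 < x → 0 ≤ ϑ x)
    (hmono : MonotoneOn (deriv ϑ) (Set.Ici (1 : ℝ)))
    (n : ℕ) (hn : 1 ≤ n) :
    ∑ i ∈ Finset.Ico 1 n, deriv ϑ (i : ℝ) ≤ ϑ n := by
  have hstep : ∀ i : ℕ, 1 ≤ i → deriv ϑ (i : ℝ) ≤ ϑ (i+1 : ℕ) - ϑ i := by
    intro i hi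
    have hi1 : (1:ℝ) ≤ (i:ℝ) := by exact_mod_cast hi
    have hab : (i:ℝ) < (i:ℝ) + 1 := by linarith
    have hcont : ContinuousOn ϑ (Set.Icc (i:ℝ) ((i:ℝ)+1)) := by
      intro x hx
      exact ((hdiff x (by rcases hx with ⟨h1, _⟩; linarith)).continuousAt).continuousWithinAt
    have hdiff' : DifferentiableOn ℝ ϑ (Set.Ioo (i:ℝ) ((i:ℝ)+1)) := by
      intro x hx
      exact (hdiff x (by rcases hx with ⟨h1, _⟩; linarith)).differentiableWithinAt
    obtain ⟨c, hc, hceq⟩ := exists_deriv_eq_slope ϑ hab hcont hdiff'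
    have hle : deriv ϑ (i:ℝ) ≤ deriv ϑ c := by
      refine hmono (Set.mem_Ici.mpr hi1) (Set.mem_Ici.mpr ?_) (le_of_lt hc.1)
      linarith [hc.1]
    rw [hceq] at hle
    have : ((i:ℝ) + 1 - i) = 1 := by ring
    rw [this, div_one] at hle
    push_cast
    linarith
  calc ∑ i ∈ Finset.Ico 1 n, deriv ϑ (i : ℝ)
      ≤ ∑ i ∈ Finset.Ico 1 n, (ϑ (i+1 : ℕ) - ϑ i) := by
        refine Finset.sum_le_sum fun i hi => ?_
        exact hstep i (Finset.mem_Ico.mp hi).1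
    _ = ϑ n - ϑ 1 := by
        rw [Finset.sum_Ico_eq_sub _ hn, Finset.sum_range_sub (fun i : ℕ => ϑ i),
          Finset.sum_range_sub (fun i : ℕ => ϑ i)]
        push_cast
        ring
    _ ≤ ϑ n := by linarith [hnonneg 1 one_pos]

end Aux4
theorem upper_bounded_exp_height_bound (σ : ℕ → ℕ → ℝ)
    (hrange : ∀ i j, 0 ≤ σ i j ∧ σ i j ≤ 1)
    (hsum : ∀ k, 2 ≤ k → ∑ i ∈ Finset.Ico 1 k, σ i (k - i) = 1)
    (ψ : ℝ → ℝ) (hψdec : Antitone ψ) (hψrange : ∀ x, 0 < ψ x ∧ ψ x ≤ 1)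
    (N : ℕ)
    (hub : ∀ n : ℕ, N ≤ n → ∀ i : ℕ, 1 ≤ i → i ≤ n - 1 →
      σ i (n - i) + σ (n - i) i ≤ ψ n)
    (ϑ : ℝ → ℝ)
    (hdiff : ∀ x : ℝ, 0 < x → DifferentiableAt ℝ ϑ x)
    (hnonneg : ∀ x : ℝ, 0 < x → 0 ≤ ϑ x)
    (hmono : MonotoneOn (deriv ϑ) (Set.Ici (1 : ℝ)))
    (hineq : ∀ x : ℝ, (N : ℝ) ≤ x → Real.exp 1 * ψ x * ϑ x ≤ deriv ϑ x)
    (hinit : 1 ≤ deriv ϑ 1) :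
    ∀ n : ℕ, 1 ≤ n →
      expPow σ (Real.exp 1) n ≤ Real.exp N * deriv ϑ n := by
  have hσ : ∀ i j, 0 ≤ σ i j := fun i j => (hrange i j).1
  have he1 : (1:ℝ) ≤ Real.exp 1 := Real.one_le_exp (by norm_num)
  have hexpN : (1:ℝ) ≤ Real.exp N := Real.one_le_exp (by positivity)
  have hexpN0 : (0:ℝ) ≤ Real.exp N := by linarith
  have hd1 : ∀ x : ℝ, 1 ≤ x → 1 ≤ deriv ϑ x := fun x hx =>
    hinit.trans (hmono (Set.mem_Ici.mpr le_rfl) (Set.mem_Ici.mpr hx) hx)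
  intro n
  induction n using Nat.strong_induction_on with
  | _ n ih =>
    intro hn
    have hdn : 1 ≤ deriv ϑ n := hd1 n (by exact_mod_cast hn)
    by_cases hbase : n ≤ N ∨ n = 1
    · have h1 : expPow σ (Real.exp 1) n ≤ (Real.exp 1) ^ (n-1) :=
        expPow_le_pow σ hσ hsum _ he1 n hn
      have h2 : (Real.exp 1 : ℝ) ^ (n-1) ≤ Real.exp N := by
        rw [← Real.exp_nat_mul]
        refine Real.exp_le_exp.mpr ?_
        have : (n : ℕ) - 1 ≤ N := by omega
        push_cast
        have : ((n-1 : ℕ) : ℝ) ≤ (N : ℝ) := by exact_mod_cast this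
        push_cast at this
        linarith
      nlinarith
    · push_neg at hbase
      have hNn : N ≤ n := by omega
      obtain ⟨m, rfl⟩ : ∃ m, n = m + 2 := ⟨n - 2, by omega⟩
      have hψn := hψrange ((m+2 : ℕ) : ℝ)
      have hrec := expPow_rec_le σ hσ hsum _ he1 m
      have step2 : ∑ i ∈ Finset.Ico 1 (m+2),
            (σ i (m+2-i) + σ (m+2-i) i) * expPow σ (Real.exp 1) i
          ≤ ∑ i ∈ Finset.Ico 1 (m+2),
            ψ ((m+2 : ℕ) : ℝ) * (Real.exp N * deriv ϑ i) := by
        refine Finset.sum_le_sum fun i hi => ?_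
        have hi' := Finset.mem_Ico.mp hi
        have hE0 : 0 ≤ expPow σ (Real.exp 1) i :=
          expPow_nonneg σ hσ _ (by linarith) i
        have hσb := hub (m+2) hNn i hi'.1 (by omega)
        have hIH := ih i (by omega) hi'.1
        calc (σ i (m+2-i) + σ (m+2-i) i) * expPow σ (Real.exp 1) i
            ≤ ψ ((m+2 : ℕ) : ℝ) * expPow σ (Real.exp 1) i :=
              mul_le_mul_of_nonneg_right hσb hE0
          _ ≤ ψ ((m+2 : ℕ) : ℝ) * (Real.exp N * deriv ϑ i) :=
              mul_le_mul_of_nonneg_left hIH (le_of_lt hψn.1)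
      have hsumd : ∑ i ∈ Finset.Ico 1 (m+2), deriv ϑ (i : ℝ) ≤ ϑ ((m+2 : ℕ) : ℝ) :=
        sum_deriv_le ϑ hdiff hnonneg hmono (m+2) (by omega)
      have hϑn : 0 ≤ ϑ ((m+2 : ℕ) : ℝ) := hnonneg _ (by positivity)
      have hiq := hineq ((m+2 : ℕ) : ℝ) (by exact_mod_cast hNn)
      calc expPow σ (Real.exp 1) (m+2)
          ≤ Real.exp 1 * ∑ i ∈ Finset.Ico 1 (m+2),
              (σ i (m+2-i) + σ (m+2-i) i) * expPow σ (Real.exp 1) i := hrec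
        _ ≤ Real.exp 1 * ∑ i ∈ Finset.Ico 1 (m+2),
              ψ ((m+2 : ℕ) : ℝ) * (Real.exp N * deriv ϑ i) :=
            mul_le_mul_of_nonneg_left step2 (by linarith)
        _ = Real.exp N * (Real.exp 1 * ψ ((m+2 : ℕ) : ℝ) *
              ∑ i ∈ Finset.Ico 1 (m+2), deriv ϑ (i : ℝ)) := by
            rw [← Finset.mul_sum, Finset.mul_sum]
            ring_nf
            rw [Finset.mul_sum, Finset.mul_sum]
            refine Finset.sum_congr rfl fun i _ => by ring
        _ ≤ Real.exp N * (Real.exp 1 * ψ ((m+2 : ℕ) : ℝ) * ϑ ((m+2 : ℕ) : ℝ)) := by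
            have h0 : 0 ≤ Real.exp 1 * ψ ((m+2 : ℕ) : ℝ) := by nlinarith [hψn.1]
            exact mul_le_mul_of_nonneg_left
              (mul_le_mul_of_nonneg_left hsumd h0) hexpN0
        _ ≤ Real.exp N * deriv ϑ ((m+2 : ℕ) : ℝ) :=
            mul_le_mul_of_nonneg_left hiq hexpN0
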